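/- Let G be a set of maps ℝᵈ → ℝᵈ closed under composition, and let f₁, f₂ : ℝᵈ → ℝᵈ be C^1 maps with bounded first derivatives. Suppose that for every compact K ⊆ ℝᵈ and every ε > 0, there exist g₁, g₂ ∈ G with ‖f₁ − g₁‖_{C^1(K)} < ε and ‖f₂ − g₂‖_{C^1(K)} < ε. Then for every compact K ⊆ ℝᵈ and every ε > 0, there exists h ∈ G with ‖f₂ ∘ f₁ − h‖_{C^0(K)} < ε. -/

import Mathlib

/-!
Given `K`, the map `f₂` is uniformly continuous on the compact neighbourhood
`K' = cthickening 1 (f₁ '' K)`, say with modulus `δ` for `ε / 2`. Approximate `f₁` on `K`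
within `min 1 δ` by `g₁`, so that `g₁ '' K ⊆ K'`, and `f₂` on `K'` within `ε / 2` by `g₂`;
then `f₂ (f₁ x)` is `ε / 2`-close to `f₂ (g₁ x)`, which is `ε / 2`-close to `g₂ (g₁ x)`.
-/

open Metric Set

variable {X Y Z : Type*} [TopologicalSpace X]

def UniformlyApproximableOnCompacts [PseudoMetricSpace Y] (G : Set (X → Y)) (f : X → Y) :
    Prop :=
  ∀ K : Set X, IsCompact K → ∀ ε > (0 : ℝ), ∃ g ∈ G, ∀ x ∈ K, dist (f x) (g x) < ε

namespace UniformlyApproximableOnCompacts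

theorem mono [PseudoMetricSpace Y] {G G' : Set (X → Y)} {f : X → Y}
    (hf : UniformlyApproximableOnCompacts G f) (hGG' : G ⊆ G') :
    UniformlyApproximableOnCompacts G' f := fun K hK ε hε ↦
  let ⟨g, hg, hfg⟩ := hf K hK ε hε
  ⟨g, hGG' hg, hfg⟩

theorem comp [PseudoMetricSpace Y] [ProperSpace Y] [PseudoMetricSpace Z]
    {G₁ : Set (X → Y)} {G₂ : Set (Y → Z)} {f₁ : X → Y} {f₂ : Y → Z}
    (h₁ : UniformlyApproximableOnCompacts G₁ f₁) (h₂ : UniformlyApproximableOnCompacts G₂ f₂)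
    (hf₁ : Continuous f₁) (hf₂ : Continuous f₂) :
    UniformlyApproximableOnCompacts (image2 (· ∘ ·) G₂ G₁) (f₂ ∘ f₁) := by
  intro K hK ε hε
  set K' := cthickening 1 (f₁ '' K)
  have hK' : IsCompact K' := (hK.image hf₁).cthickening
  obtain ⟨δ, hδ, hf₂K'⟩ := Metric.uniformContinuousOn_iff.1
    (hK'.uniformContinuousOn_of_continuous hf₂.continuousOn) (ε / 2) (half_pos hε)
  obtain ⟨g₁, hg₁, hfg₁⟩ := h₁ K hK (min 1 δ) (lt_min one_pos hδ)
  obtain ⟨g₂, hg₂, hfg₂⟩ := h₂ K' hK' (ε / 2) (half_pos hε)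
  refine ⟨g₂ ∘ g₁, mem_image2_of_mem hg₂ hg₁, fun x hx ↦ ?_⟩
  have hf₁x : f₁ x ∈ K' := self_subset_cthickening _ (mem_image_of_mem f₁ hx)
  have hg₁x : g₁ x ∈ K' := mem_cthickening_of_dist_le _ _ _ _ (mem_image_of_mem f₁ hx)
    (by rw [dist_comm]; exact (hfg₁ x hx).le.trans (min_le_left _ _))
  calc dist (f₂ (f₁ x)) (g₂ (g₁ x))
      ≤ dist (f₂ (f₁ x)) (f₂ (g₁ x)) + dist (f₂ (g₁ x)) (g₂ (g₁ x)) := dist_triangle _ _ _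
    _ < ε / 2 + ε / 2 :=
        add_lt_add (hf₂K' _ hf₁x _ hg₁x ((hfg₁ x hx).trans_le (min_le_right _ _)))
          (hfg₂ _ hg₁x)
    _ = ε := add_halves ε

end UniformlyApproximableOnCompacts

theorem approx_composition_general (d : ℕ)
    (G : Set ((Fin d → ℝ) → (Fin d → ℝ)))
    (hGcomp : ∀ g₁ ∈ G, ∀ g₂ ∈ G, g₂ ∘ g₁ ∈ G)
    (f₁ f₂ : (Fin d → ℝ) → (Fin d → ℝ))
    (hf₁ : ContDiff ℝ 1 f₁) (hf₂ : ContDiff ℝ 1 f₂)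
    (happrox : ∀ K : Set (Fin d → ℝ), IsCompact K → ∀ ε > (0 : ℝ),
      ∃ g₁ ∈ G, ∃ g₂ ∈ G,
        (∀ x ∈ K, ‖f₁ x - g₁ x‖ < ε ∧ ‖fderiv ℝ f₁ x - fderiv ℝ g₁ x‖ < ε) ∧
        (∀ x ∈ K, ‖f₂ x - g₂ x‖ < ε ∧ ‖fderiv ℝ f₂ x - fderiv ℝ g₂ x‖ < ε)) :
    ∀ K : Set (Fin d → ℝ), IsCompact K → ∀ ε > (0 : ℝ),
      ∃ h ∈ G, ∀ x ∈ K, ‖f₂ (f₁ x) - h x‖ < ε := by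
  have h₁ : UniformlyApproximableOnCompacts G f₁ := fun K hK ε hε ↦
    let ⟨g₁, hg₁, _, _, hfg, _⟩ := happrox K hK ε hε
    ⟨g₁, hg₁, fun x hx ↦ by simpa only [dist_eq_norm] using (hfg x hx).1⟩
  have h₂ : UniformlyApproximableOnCompacts G f₂ := fun K hK ε hε ↦
    let ⟨_, _, g₂, hg₂, _, hfg⟩ := happrox K hK ε hε
    ⟨g₂, hg₂, fun x hx ↦ by simpa only [dist_eq_norm] using (hfg x hx).1⟩
  have hcomp : image2 (· ∘ ·) G G ⊆ G := by
    rintro _ ⟨g₂, hg₂, g₁, hg₁, rfl⟩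
    exact hGcomp g₁ hg₁ g₂ hg₂
  intro K hK ε hε
  obtain ⟨h, hG, hfh⟩ := ((h₁.comp h₂ hf₁.continuous hf₂.continuous).mono hcomp) K hK ε hε
  exact ⟨h, hG, fun x hx ↦ by simpa only [dist_eq_norm, Function.comp_apply] using hfh x hx⟩

/-- If a composition-closed family `G` approximates `C^1` maps `f₁, f₂` (with bounded
first derivatives) in `C^1` norm on every compact set, then it approximates the
composition `f₂ ∘ f₁` in `C^0` norm on every compact set. -/
theorem approx_composition (d : ℕ)
    (G : Set ((Fin d → ℝ) → (Fin d → ℝ)))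
    (hGcomp : ∀ g₁ ∈ G, ∀ g₂ ∈ G, g₂ ∘ g₁ ∈ G)
    (f₁ f₂ : (Fin d → ℝ) → (Fin d → ℝ))
    (hf₁ : ContDiff ℝ 1 f₁) (hf₂ : ContDiff ℝ 1 f₂)
    (hbdd₁ : ∃ C : ℝ, ∀ x, ‖fderiv ℝ f₁ x‖ ≤ C)
    (hbdd₂ : ∃ C : ℝ, ∀ x, ‖fderiv ℝ f₂ x‖ ≤ C)
    (happrox : ∀ K : Set (Fin d → ℝ), IsCompact K → ∀ ε > (0 : ℝ),
      ∃ g₁ ∈ G, ∃ g₂ ∈ G,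
        (∀ x ∈ K, ‖f₁ x - g₁ x‖ < ε ∧ ‖fderiv ℝ f₁ x - fderiv ℝ g₁ x‖ < ε) ∧
        (∀ x ∈ K, ‖f₂ x - g₂ x‖ < ε ∧ ‖fderiv ℝ f₂ x - fderiv ℝ g₂ x‖ < ε)) :
    ∀ K : Set (Fin d → ℝ), IsCompact K → ∀ ε > (0 : ℝ),
      ∃ h ∈ G, ∀ x ∈ K, ‖f₂ (f₁ x) - h x‖ < ε :=
  approx_composition_general d G hGcomp f₁ f₂ hf₁ hf₂ happrox
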